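/- Let α be a composition. There is exactly one standard composition tableau of shape α (equivalently, the quasisymmetric Schur function S_α equals the single term F_α) if and only if α = (m)·γ for some m ∈ ℕ_0 (m = 0 meaning the part is absent) and some γ ∈ C_2 = {(1^{e_1}, 2, 1^{e_2}, …, 2, 1^{e_k}) : k ≥ 0, e_i ≥ 1 for 1 ≤ i ≤ k−1, e_k ≥ 0}. -/

import Mathlib

/-- `SCTChain α U`: the filling `U` of the diagram of the composition `α`
(cells `0`-indexed, rows numbered from the top) arises from a saturated chain
in the poset `L_C` of compositions, where at each cover step either a new
part `1` is prepended or the leftmost part of a given size is increased by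
`1`, and the cell created at the step reaching a composition of size `s` is
filled with `s`. -/
inductive SCTChain : List ℕ → ((ℕ × ℕ) → ℕ) → Prop
  | nil : SCTChain [] (fun _ => 0)
  | prepend {β : List ℕ} {U : (ℕ × ℕ) → ℕ} (h : SCTChain β U) :
      SCTChain (1 :: β)
        (fun c => if c = (0, 0) then β.sum + 1
          else if c.1 = 0 then 0 else U (c.1 - 1, c.2))
  | grow {β : List ℕ} {U : (ℕ × ℕ) → ℕ} (h : SCTChain β U) (i : ℕ)
      (hi : i < β.length) (hleft : ∀ j < i, β.getD j 0 ≠ β.getD i 0) :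
      SCTChain (β.set i (β.getD i 0 + 1))
        (fun c => if c = (i, β.getD i 0) then β.sum + 1 else U c)

/-- `T` is a standard composition tableau of shape `α ⊨ n`: the filling of
the diagram of `α` obtained from a saturated chain
`∅ = α^{n+1} ⋖ ⋯ ⋖ α^1 = α` in `L_C` by placing entry `i` in the cell in
which `α^i` differs from `α^{i+1}` (so the cell created at the step reaching
size `s` receives the entry `n + 1 - s`); entries are `0` off the diagram. -/
def IsSCT (α : List ℕ) (T : (ℕ × ℕ) → ℕ) : Prop :=
  ∃ U, SCTChain α U ∧ T = fun c => if U c = 0 then 0 else α.sum + 1 - U c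

/-- The descent set of a standard composition tableau: those `i` such that
the entry `i+1` lies in a cell weakly to the right of the cell containing
`i`. -/
def desC (T : (ℕ × ℕ) → ℕ) : Set ℕ :=
  {i | 0 < i ∧ ∃ p q : ℕ × ℕ, T p = i ∧ T q = i + 1 ∧ p.2 ≤ q.2}

/-- `set(α) = {α₁, α₁+α₂, …, α₁+⋯+α_{ℓ(α)-1}}`, the subset of `[n-1]`
associated to a composition `α ⊨ n`; `com(T) = β` iff `desC T = compToSet β`. -/
def compToSet (α : List ℕ) : Set ℕ :=
  {s | ∃ i, 0 < i ∧ i < α.length ∧ s = (α.take i).sum}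

/-- The quasisymmetric Schur function `S_α` is F-multiplicity free iff all
standard composition tableaux of shape `α` have pairwise distinct descent
sets. -/
def FmfSCT (α : List ℕ) : Prop :=
  ∀ T T', IsSCT α T → IsSCT α T' → desC T = desC T' → T = T'

/-- Membership in the set
`C₂ = {(1^{e₁}, 2, 1^{e₂}, …, 2, 1^{e_k}) : k ≥ 0, eᵢ ≥ 1 for i < k, e_k ≥ 0}`
of compositions (including the empty composition). -/
inductive InC2 : List ℕ → Prop
  | nil : InC2 []
  | one {γ : List ℕ} : InC2 γ → InC2 (1 :: γ)
  | one_two {γ : List ℕ} : InC2 γ → InC2 (1 :: 2 :: γ)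


/-!
Read backwards, a standard composition tableau of shape `α` is the filling of a saturated chain
`∅ ⋖ ⋯ ⋖ α` in `L_C` recording when each cell was created, so `α` has a unique SCT iff it has
a unique such chain. A nonempty composition always covers the one obtained by removing the last
cell of its first row (deleting a leading part `1`, or shrinking the first part), and
`canonicalFill` is the filling of the chain that always steps down this way.

If every part after the first is `1`, or a `2` right after a `1` (`C2Rel` on consecutive parts,
which is exactly `α = (m)·γ` with `γ ∈ C₂`), this is the only lower cover of `α` and it inherits
the condition, so every chain is the canonical one. Otherwise, either the canonical lower cover
still violates the condition, and two distinct chains of it extend to `α`, or `α` also covers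
the composition with its second part shrunk; a chain through that cover puts the largest entry
in the second row, while the canonical one puts it in the first.
-/

open List

def C2Rel (a b : ℕ) : Prop := b = 1 ∨ (a = 1 ∧ b = 2)

theorem InC2.isChain_cons {γ : List ℕ} (h : InC2 γ) (m : ℕ) : IsChain C2Rel (m :: γ) := by
  induction h generalizing m with
  | nil => exact isChain_singleton m
  | one _ ih => exact isChain_cons_cons.2 ⟨.inl rfl, ih 1⟩
  | one_two _ ih =>
      exact isChain_cons_cons.2 ⟨.inl rfl, isChain_cons_cons.2 ⟨.inr ⟨rfl, rfl⟩, ih 2⟩⟩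

theorem InC2.of_isChain_cons :
    ∀ {m : ℕ} {γ : List ℕ}, m ≠ 1 → IsChain C2Rel (m :: γ) → InC2 γ
  | _, [], _, _ => .nil
  | _, [b], _, h => by
      obtain rfl : b = 1 := by simp only [isChain_pair, C2Rel] at h; omega
      exact .one .nil
  | _, b :: c :: r, hm, h => by
      obtain ⟨hb, hc, hr⟩ : C2Rel _ b ∧ C2Rel b c ∧ IsChain C2Rel (c :: r) := by
        simpa only [isChain_cons_cons] using h
      obtain rfl : b = 1 := by unfold C2Rel at hb; omega
      rcases hc with hc | ⟨-, rfl⟩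
      · exact .one (of_isChain_cons hm (isChain_cons_cons.2 ⟨.inl hc, hr⟩))
      · exact .one_two (of_isChain_cons (by decide) hr)

theorem exists_inC2_iff_isChain {α : List ℕ} (hpos : ∀ x ∈ α, 0 < x) :
    (∃ γ, InC2 γ ∧ (α = γ ∨ ∃ m, 0 < m ∧ α = m :: γ)) ↔ IsChain C2Rel α := by
  refine ⟨?_, fun h => ?_⟩
  · rintro ⟨γ, hγ, rfl | ⟨m, -, rfl⟩⟩
    · exact (hγ.isChain_cons 0).tail
    · exact hγ.isChain_cons m
  · match α, h with
    | [], _ => exact ⟨[], .nil, .inl rfl⟩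
    | a :: γ, h =>
      by_cases ha : a = 1
      · subst ha
        refine ⟨1 :: γ, .of_isChain_cons zero_ne_one ?_, .inl rfl⟩
        exact isChain_cons_cons.2 ⟨.inl rfl, h⟩
      · exact ⟨γ, .of_isChain_cons ha h, .inr ⟨a, hpos a mem_cons_self, rfl⟩⟩

theorem sum_set_getD_add_one : ∀ {l : List ℕ} {i : ℕ}, i < l.length →
    (l.set i (l.getD i 0 + 1)).sum = l.sum + 1
  | _ :: _, 0, _ => by simp only [getD_cons_zero, set_cons_zero, sum_cons]; omega
  | _ :: l, i + 1, h => by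
      simp only [set_cons_succ, getD_cons_succ, sum_cons,
        sum_set_getD_add_one (l := l) (i := i) (by simpa using h)]
      omega

theorem getD_le_getD_set {l : List ℕ} {i j : ℕ} :
    l.getD j 0 ≤ (l.set i (l.getD i 0 + 1)).getD j 0 := by
  simp only [getD_eq_getElem?_getD, getElem?_set]
  split_ifs <;> simp_all

def prependFill (β : List ℕ) (U : ℕ × ℕ → ℕ) : ℕ × ℕ → ℕ :=
  fun c => if c = (0, 0) then β.sum + 1 else if c.1 = 0 then 0 else U (c.1 - 1, c.2)

def growFill (β : List ℕ) (i : ℕ) (U : ℕ × ℕ → ℕ) : ℕ × ℕ → ℕ :=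
  fun c => if c = (i, β.getD i 0) then β.sum + 1 else U c

namespace SCTChain

variable {α : List ℕ} {U : ℕ × ℕ → ℕ}

theorem grow_zero {b : ℕ} {r : List ℕ} (h : SCTChain (b :: r) U) :
    SCTChain ((b + 1) :: r) (growFill (b :: r) 0 U) :=
  h.grow 0 (by simp) (by simp)

theorem grow_one {a b : ℕ} {r : List ℕ} (h : SCTChain (a :: b :: r) U) (hab : a ≠ b) :
    SCTChain (a :: (b + 1) :: r) (growFill (a :: b :: r) 1 U) :=
  h.grow 1 (by simp) (by simpa using hab)

theorem pos (h : SCTChain α U) : ∀ x ∈ α, 0 < x := by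
  induction h with
  | nil => simp
  | prepend _ ih => simpa using ih
  | grow _ i _ _ ih =>
      intro x hx
      rcases mem_or_eq_of_mem_set hx with hx | rfl
      exacts [ih x hx, Nat.succ_pos _]

theorem le_sum (h : SCTChain α U) (c : ℕ × ℕ) : U c ≤ α.sum := by
  induction h generalizing c with
  | nil => simp
  | prepend _ ih =>
      have := ih (c.1 - 1, c.2)
      simp only [sum_cons]
      split_ifs <;> omega
  | grow _ i hi _ ih =>
      rw [sum_set_getD_add_one hi]
      have := ih c
      dsimp only
      split_ifs <;> omega

theorem eq_zero_of_getD_le (h : SCTChain α U) {c : ℕ × ℕ} (hc : α.getD c.1 0 ≤ c.2) :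
    U c = 0 := by
  induction h generalizing c with
  | nil => rfl
  | prepend _ ih =>
      obtain ⟨_ | r, s⟩ := c
      · simp only [getD_cons_zero] at hc
        simp [show s ≠ 0 by omega]
      · simp_all
  | @grow β _ _ i hi _ ih =>
      have hne : c ≠ (i, β.getD i 0) := by
        rintro rfl
        simp [getD_eq_getElem?_getD, hi] at hc
      show growFill β i _ c = 0
      rw [growFill, if_neg hne]
      exact ih (getD_le_getD_set.trans hc)

theorem eq_of_growFill_eq {β : List ℕ} {i : ℕ} {U V : ℕ × ℕ → ℕ} (hU : SCTChain β U)
    (hV : SCTChain β V) (h : growFill β i U = growFill β i V) : U = V := by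
  funext c
  by_cases hc : c = (i, β.getD i 0)
  · subst hc
    rw [hU.eq_zero_of_getD_le le_rfl, hV.eq_zero_of_getD_le le_rfl]
  · have hUV := congrFun h c
    simp only [growFill, if_neg hc] at hUV
    exact hUV

end SCTChain

theorem prependFill_injective (β : List ℕ) : Function.Injective (prependFill β) := by
  intro U V h
  funext ⟨r, s⟩
  simpa [prependFill] using congrFun h (r + 1, s)

def canonicalFill : List ℕ → ℕ × ℕ → ℕ
  | [] | 0 :: _ => fun _ => 0
  | 1 :: r => prependFill r (canonicalFill r)
  | (b + 2) :: r => growFill ((b + 1) :: r) 0 (canonicalFill ((b + 1) :: r))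
termination_by l => l.sum

theorem sctChain_canonicalFill :
    ∀ {α : List ℕ}, (∀ x ∈ α, 0 < x) → SCTChain α (canonicalFill α)
  | [], _ => by rw [canonicalFill]; exact .nil
  | 0 :: _, h => absurd (h 0 mem_cons_self) (lt_irrefl 0)
  | 1 :: r, h => by
      rw [canonicalFill]
      exact .prepend (sctChain_canonicalFill fun x hx => h x (mem_cons_of_mem _ hx))
  | (b + 2) :: r, h => by
      rw [canonicalFill]
      exact (sctChain_canonicalFill (by simpa using h)).grow_zero
termination_by α => α.sum

theorem canonicalFill_cons_apply {a : ℕ} (ha : 0 < a) (r : List ℕ) :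
    canonicalFill (a :: r) (0, a - 1) = (a :: r).sum := by
  obtain _ | _ | b := a
  · omega
  · simp [canonicalFill, prependFill, add_comm]
  · simp [canonicalFill, growFill]
    omega

theorem eq_zero_of_isChain_set {β : List ℕ} {i : ℕ} (hpos : ∀ x ∈ β, 0 < x)
    (hi : i < β.length) (hleft : ∀ j < i, β.getD j 0 ≠ β.getD i 0)
    (h : IsChain C2Rel (β.set i (β.getD i 0 + 1))) : i = 0 := by
  obtain _ | j := i
  · rfl
  have hrel := h.getElem j (by simpa using hi)
  have hj : β.getD j 0 ≠ β.getD (j + 1) 0 := hleft j j.lt_succ_self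
  have := hpos _ (getElem_mem hi)
  simp only [getD_eq_getElem _ _ hi, getD_eq_getElem _ _ (j.lt_succ_self.trans hi)] at hj hrel
  simp [C2Rel] at hrel
  omega

theorem SCTChain.eq_canonicalFill {α : List ℕ} {U : ℕ × ℕ → ℕ} (h : SCTChain α U)
    (hα : IsChain C2Rel α) : U = canonicalFill α := by
  induction h with
  | nil => rw [canonicalFill]
  | prepend _ ih => rw [canonicalFill, ← ih hα.tail]; rfl
  | @grow β _ h i hi hleft ih =>
      obtain rfl := eq_zero_of_isChain_set h.pos hi hleft hα
      obtain _ | ⟨_ | b, r⟩ := β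
      · simp at hi
      · exact absurd (h.pos 0 mem_cons_self) (lt_irrefl 0)
      change IsChain C2Rel ((b + 2) :: r) at hα
      have hα' : IsChain C2Rel ((b + 1) :: r) := hα.imp_head fun hc => by
        unfold C2Rel at hc ⊢; omega
      show _ = canonicalFill ((b + 2) :: r)
      rw [canonicalFill, ← ih hα']
      rfl

theorem growFill_one_ne_canonicalFill {a b : ℕ} {r : List ℕ}
    (hpos : ∀ x ∈ a :: b :: r, 0 < x) :
    growFill (a :: b :: r) 1 (canonicalFill (a :: b :: r)) ≠
      canonicalFill (a :: (b + 1) :: r) := by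
  intro h
  have ha := hpos a mem_cons_self
  have htop := congrFun h (0, a - 1)
  have hle := (sctChain_canonicalFill hpos).le_sum (0, a - 1)
  rw [canonicalFill_cons_apply ha] at htop
  simp only [growFill, Prod.mk.injEq, zero_ne_one, false_and, if_false] at htop
  simp only [sum_cons] at htop hle
  omega

theorem exists_sctChain_ne_canonicalFill : ∀ {α : List ℕ}, (∀ x ∈ α, 0 < x) →
    ¬ IsChain C2Rel α → ∃ U, SCTChain α U ∧ U ≠ canonicalFill α
  | [], _, h => absurd isChain_nil h
  | [_], _, h => absurd (isChain_singleton _) h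
  | 0 :: _ :: _, hpos, _ => absurd (hpos 0 mem_cons_self) (lt_irrefl 0)
  | 1 :: b :: r, hpos, h => by
      have hpos' : ∀ x ∈ b :: r, 0 < x := fun x hx => hpos x (mem_cons_of_mem _ hx)
      by_cases htail : IsChain C2Rel (b :: r)
      · obtain ⟨b, rfl⟩ : ∃ b', b = b' + 1 :=
          Nat.exists_eq_succ_of_ne_zero (hpos' b mem_cons_self).ne'
        have hb : 2 ≤ b := by
          have hrel : ¬ C2Rel 1 (b + 1) := fun hrel => h (isChain_cons_cons.2 ⟨hrel, htail⟩)
          unfold C2Rel at hrel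
          omega
        have hpos'' : ∀ x ∈ 1 :: b :: r, 0 < x := by
          simp only [forall_mem_cons] at hpos' ⊢
          exact ⟨Nat.one_pos, by omega, hpos'.2⟩
        exact ⟨_, (sctChain_canonicalFill hpos'').grow_one (by omega),
          growFill_one_ne_canonicalFill hpos''⟩
      · obtain ⟨U, hU, hne⟩ := exists_sctChain_ne_canonicalFill hpos' htail
        refine ⟨_, hU.prepend, fun heq => hne (prependFill_injective (b :: r) ?_)⟩
        rw [canonicalFill] at heq
        exact heq
  | (c + 2) :: b :: r, hpos, h => by
      have hpos' : ∀ x ∈ (c + 1) :: b :: r, 0 < x := by simpa using hpos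
      by_cases hpred : IsChain C2Rel ((c + 1) :: b :: r)
      · obtain ⟨rfl, rfl⟩ : c = 0 ∧ b = 2 := by
          rw [isChain_cons_cons] at hpred h
          have hrel : ¬ C2Rel (c + 2) b := fun hrel => h ⟨hrel, hpred.2⟩
          have hrel' := hpred.1
          unfold C2Rel at hrel hrel'
          omega
        have hpos'' : ∀ x ∈ 2 :: 1 :: r, 0 < x := by simpa using hpos
        exact ⟨_, (sctChain_canonicalFill hpos'').grow_one (by omega),
          growFill_one_ne_canonicalFill hpos''⟩
      · obtain ⟨U, hU, hne⟩ := exists_sctChain_ne_canonicalFill hpos' hpred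
        refine ⟨_, hU.grow_zero, fun heq => hne ?_⟩
        rw [canonicalFill] at heq
        exact hU.eq_of_growFill_eq (sctChain_canonicalFill hpos') heq
termination_by α => α.sum

theorem existsUnique_sctChain_iff {α : List ℕ} (hpos : ∀ x ∈ α, 0 < x) :
    (∃! U, SCTChain α U) ↔ IsChain C2Rel α := by
  refine ⟨fun ⟨U, _, huniq⟩ => ?_,
    fun h => ⟨_, sctChain_canonicalFill hpos, fun _ hU => hU.eq_canonicalFill h⟩⟩
  by_contra h
  obtain ⟨V, hV, hne⟩ := exists_sctChain_ne_canonicalFill hpos h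
  exact hne ((huniq V hV).trans (huniq _ (sctChain_canonicalFill hpos)).symm)

def reverseEntries (n : ℕ) (U : ℕ × ℕ → ℕ) : ℕ × ℕ → ℕ :=
  fun c => if U c = 0 then 0 else n + 1 - U c

theorem reverseEntries_reverseEntries {n : ℕ} {U : ℕ × ℕ → ℕ} (hU : ∀ c, U c ≤ n) :
    reverseEntries n (reverseEntries n U) = U := by
  funext c
  have := hU c
  simp only [reverseEntries]
  split_ifs <;> omega

theorem existsUnique_isSCT_iff {α : List ℕ} :
    (∃! T, IsSCT α T) ↔ ∃! U, SCTChain α U := by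
  have hinv {U} (hU : SCTChain α U) : reverseEntries α.sum (reverseEntries α.sum U) = U :=
    reverseEntries_reverseEntries hU.le_sum
  constructor
  · rintro ⟨_, ⟨U, hU, rfl⟩, huniq⟩
    refine ⟨U, hU, fun V hV => ?_⟩
    have hT : reverseEntries α.sum V = reverseEntries α.sum U := huniq _ ⟨V, hV, rfl⟩
    rw [← hinv hV, hT, hinv hU]
  · rintro ⟨U, hU, huniq⟩
    exact ⟨_, ⟨U, hU, rfl⟩, fun T ⟨V, hV, hT⟩ => hT ▸ huniq V hV ▸ rfl⟩

/-- There is exactly one standard composition tableau of shape `α`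
(equivalently `S_α = F_α`) if and only if `α = (m)·γ` for some `m ∈ ℕ₀`
(with `m = 0` meaning the part is absent) and some `γ ∈ C₂`. -/
theorem sct_unique_iff (α : List ℕ) (hpos : ∀ x ∈ α, 0 < x) :
    (∃! T, IsSCT α T) ↔
      ∃ γ, InC2 γ ∧ (α = γ ∨ ∃ m, 0 < m ∧ α = m :: γ) := by
  rw [existsUnique_isSCT_iff, existsUnique_sctChain_iff hpos, exists_inC2_iff_isChain hpos]
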